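/- Every coefficient of the power series expansion of (φ(q)² + φ(q³)²) / [(q³;q¹²)_∞ (q⁹;q¹²)_∞ (q¹²;q¹²)_∞] in q is strictly positive, where φ(q) = ∑_{n∈ℤ} q^{n²}. -/

import Mathlib

/-!
Read every factor as a power series with nonnegative coefficients. The numerator
`φ(q)² + φ(q³)²` starts `2 + 4q + 4q² + ⋯`, and `1 / J_{3,12}` is the product of the geometric
series `1 / (1 - q^(3+12i))`, `1 / (1 - q^(9+12i))`, `1 / (1 - q^(12+12i))`; the factor
`1 / (1 - q³)` alone makes its coefficient at every multiple of `3` at least `1`. So the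
coefficient of `q^n` in the quotient is at least the numerator's coefficient at `n % 3` times the
reciprocal's at `3 * (n / 3)`, which is positive.

On the analytic side, the coefficient of `q^n` in the partial products of the geometric series
stabilises after `n + 1` factors and is dominated by its limit, so for `|q| < 1` dominated
convergence identifies the formal product with the real function `1 / J_{3,12}`.
-/

/-- The q-Pochhammer infinite product `(a; q)_∞ = ∏_{i≥0} (1 - a q^i)` (real). -/
noncomputable def qPochR (a q : ℝ) : ℝ := ∏' i : ℕ, (1 - a * q ^ i)

/-- Ramanujan's theta function `φ(q) = ∑_{n∈ℤ} q^{n²}` (real). -/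
noncomputable def phiR (q : ℝ) : ℝ := ∑' n : ℤ, q ^ (n.natAbs ^ 2)

open PowerSeries Finset Filter Topology Function

section OneSubPow

variable {e : ℕ → ℕ} {q : ℝ}

theorem abs_pow_lt_one (hq : |q| < 1) {k : ℕ} (hk : k ≠ 0) : |q ^ k| < 1 := by
  rw [abs_pow]
  exact pow_lt_one₀ (abs_nonneg q) hq hk

theorem one_sub_pow_pos (hq : |q| < 1) {k : ℕ} (hk : k ≠ 0) : 0 < 1 - q ^ k := by
  linarith [le_abs_self (q ^ k), abs_pow_lt_one hq hk]

theorem summable_norm_pow_comp_injective {β : Type*} {g : β → ℕ} (hg : Injective g)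
    (hq : |q| < 1) : Summable fun b => ‖q ^ g b‖ := by
  simp only [norm_pow, Real.norm_eq_abs]
  exact (summable_geometric_of_lt_one (abs_nonneg q) hq).comp_injective hg

theorem summable_norm_pow_of_lt (he : ∀ i, i < e i) (hq : |q| < 1) :
    Summable fun i => ‖q ^ e i‖ :=
  (summable_geometric_of_lt_one (abs_nonneg q) hq).of_nonneg_of_le (fun _ => norm_nonneg _)
    fun i => by
      rw [norm_pow, Real.norm_eq_abs]
      exact pow_le_pow_of_le_one (abs_nonneg q) hq.le (he i).le

theorem summable_log_one_sub_pow (he : ∀ i, i < e i) (hq : |q| < 1) :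
    Summable fun i => Real.log (1 - q ^ e i) := by
  simpa [sub_eq_add_neg] using
    Real.summable_log_one_add_of_summable (summable_norm_pow_of_lt he hq).of_norm.neg

theorem tprod_one_sub_pow_pos (he : ∀ i, i < e i) (hq : |q| < 1) :
    0 < ∏' i, (1 - q ^ e i) := by
  rw [← Real.rexp_tsum_eq_tprod (fun i => one_sub_pow_pos hq (Nat.ne_zero_of_lt (he i)))
    (summable_log_one_sub_pow he hq)]
  exact Real.exp_pos _

theorem tendsto_prod_range_one_sub_pow (he : ∀ i, i < e i) (hq : |q| < 1) :
    Tendsto (fun N => ∏ i ∈ range N, (1 - q ^ e i)) atTop (𝓝 (∏' i, (1 - q ^ e i))) :=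
  (Real.multipliable_of_summable_log (fun i => one_sub_pow_pos hq (Nat.ne_zero_of_lt (he i)))
    (summable_log_one_sub_pow he hq)).hasProd.tendsto_prod_nat

theorem tprod_le_prod_range_one_sub_pow (he : ∀ i, i < e i) {x : ℝ} (hx₀ : 0 ≤ x) (hx₁ : x < 1)
    (N : ℕ) : ∏' i, (1 - x ^ e i) ≤ ∏ i ∈ range N, (1 - x ^ e i) := by
  have hx : |x| < 1 := by rwa [abs_of_nonneg hx₀]
  refine Antitone.le_of_tendsto (antitone_nat_of_succ_le fun N => ?_)
    (tendsto_prod_range_one_sub_pow he hx) N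
  rw [prod_range_succ]
  exact mul_le_of_le_one_right
    (prod_nonneg fun i _ => (one_sub_pow_pos hx (Nat.ne_zero_of_lt (he i))).le)
    (by linarith [pow_nonneg hx₀ (e N)])

end OneSubPow

theorem phiR_eq_one_add_two_mul_tsum {x : ℝ} (hx : |x| < 1) :
    phiR x = 1 + 2 * ∑' n : ℕ+, x ^ ((n : ℕ) ^ 2) := by
  have hsq : Summable fun n : ℕ => x ^ (n ^ 2) :=
    (summable_norm_pow_comp_injective (Nat.pow_left_injective two_ne_zero) hx).of_norm
  have hsum : Summable fun n : ℤ => x ^ (n.natAbs ^ 2) :=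
    summable_int_iff_summable_nat_and_neg.mpr ⟨by simpa using hsq, by simpa using hsq⟩
  rw [phiR, tsum_int_eq_zero_add_two_mul_tsum_pnat (fun n => by simp) hsum]
  simp

theorem qPochR_pow_pow (q : ℝ) (a b : ℕ) :
    qPochR (q ^ a) (q ^ b) = ∏' i, (1 - q ^ (a + b * i)) := by
  simp only [qPochR, ← pow_mul, ← pow_add]

namespace PowerSeries

def nonnegCoeffs : Subsemiring ℝ⟦X⟧ where
  carrier := {φ | ∀ n, 0 ≤ coeff n φ}
  mul_mem' {φ ψ} hφ hψ n := by
    rw [coeff_mul]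
    exact sum_nonneg fun p _ => mul_nonneg (hφ _) (hψ _)
  one_mem' n := by
    rw [coeff_one]
    split_ifs <;> norm_num
  add_mem' {φ ψ} hφ hψ n := by
    rw [map_add]
    exact add_nonneg (hφ n) (hψ n)
  zero_mem' n := by simp

theorem coeff_mul_coeff_le_coeff_mul {φ ψ : ℝ⟦X⟧} (hφ : φ ∈ nonnegCoeffs)
    (hψ : ψ ∈ nonnegCoeffs) (i j : ℕ) : coeff i φ * coeff j ψ ≤ coeff (i + j) (φ * ψ) := by
  rw [coeff_mul]
  exact single_le_sum (f := fun p : ℕ × ℕ => coeff p.1 φ * coeff p.2 ψ)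
    (fun p _ => mul_nonneg (hφ _) (hψ _)) (mem_antidiagonal.2 rfl : (i, j) ∈ antidiagonal (i + j))

theorem coeff_mul_pos {φ ψ : ℝ⟦X⟧} (hφ : φ ∈ nonnegCoeffs) (hψ : ψ ∈ nonnegCoeffs) {i j : ℕ}
    (hi : 0 < coeff i φ) (hj : 0 < coeff j ψ) : 0 < coeff (i + j) (φ * ψ) :=
  (mul_pos hi hj).trans_le (coeff_mul_coeff_le_coeff_mul hφ hψ i j)

theorem coeff_add_pos {φ ψ : ℝ⟦X⟧} (hψ : ψ ∈ nonnegCoeffs) {n : ℕ} (hn : 0 < coeff n φ) :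
    0 < coeff n (φ + ψ) := by
  rw [map_add]
  exact add_pos_of_pos_of_nonneg hn (hψ n)

noncomputable def indicatorSeries (S : Set ℕ) : ℝ⟦X⟧ := mk (S.indicator 1)

theorem coeff_indicatorSeries (S : Set ℕ) (n : ℕ) :
    coeff n (indicatorSeries S) = S.indicator 1 n :=
  coeff_mk _ _

theorem indicatorSeries_mem_nonnegCoeffs (S : Set ℕ) : indicatorSeries S ∈ nonnegCoeffs :=
  fun n => by
    rw [coeff_indicatorSeries]
    exact Set.indicator_nonneg (fun _ _ => zero_le_one) n

def HasAbsSumAt (φ : ℝ⟦X⟧) (q v : ℝ) : Prop :=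
  Summable (fun n => ‖coeff n φ * q ^ n‖) ∧ HasSum (fun n => coeff n φ * q ^ n) v

namespace HasAbsSumAt

variable {φ ψ : ℝ⟦X⟧} {q v w : ℝ}

theorem one (q : ℝ) : HasAbsSumAt 1 q 1 := by
  have h : (fun n => coeff n (1 : ℝ⟦X⟧) * q ^ n) = fun n => if n = 0 then 1 else 0 := by
    ext n; split_ifs with hn <;> simp [hn]
  refine ⟨summable_of_ne_finset_zero (s := {0}) fun n hn => ?_, h ▸ hasSum_ite_eq 0 1⟩
  simp_all [coeff_one]

theorem add (hφ : HasAbsSumAt φ q v) (hψ : HasAbsSumAt ψ q w) :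
    HasAbsSumAt (φ + ψ) q (v + w) := by
  simp only [HasAbsSumAt, map_add, add_mul]
  exact ⟨(hφ.1.add hψ.1).of_nonneg_of_le (fun _ => norm_nonneg _) fun _ => norm_add_le _ _,
    hφ.2.add hψ.2⟩

theorem mul (hφ : HasAbsSumAt φ q v) (hψ : HasAbsSumAt ψ q w) :
    HasAbsSumAt (φ * ψ) q (v * w) := by
  have hcoeff : ∀ n, coeff n (φ * ψ) * q ^ n =
      ∑ p ∈ antidiagonal n, coeff p.1 φ * q ^ p.1 * (coeff p.2 ψ * q ^ p.2) := fun n => by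
    rw [coeff_mul, sum_mul]
    refine sum_congr rfl fun p hp => ?_
    rw [← mem_antidiagonal.1 hp, pow_add]
    ring
  simp only [HasAbsSumAt, hcoeff]
  have hsum := summable_norm_sum_mul_antidiagonal_of_summable_norm
    (f := fun n => coeff n φ * q ^ n) (g := fun n => coeff n ψ * q ^ n) hφ.1 hψ.1
  refine ⟨hsum, ?_⟩
  rw [← hφ.2.tsum_eq, ← hψ.2.tsum_eq,
    tsum_mul_tsum_eq_tsum_sum_antidiagonal_of_summable_norm hφ.1 hψ.1]
  exact hsum.of_norm.hasSum

theorem prod {ι : Type*} (s : Finset ι) {φ : ι → ℝ⟦X⟧} {v : ι → ℝ}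
    (h : ∀ i ∈ s, HasAbsSumAt (φ i) q (v i)) : HasAbsSumAt (∏ i ∈ s, φ i) q (∏ i ∈ s, v i) := by
  induction s using Finset.cons_induction with
  | empty => exact one q
  | cons i s hi ih =>
    rw [prod_cons, prod_cons]
    exact (h i (mem_cons_self i s)).mul (ih fun j hj => h j (mem_cons_of_mem hj))

end HasAbsSumAt

theorem hasAbsSumAt_indicatorSeries_range {β : Type*} {g : β → ℕ} (hg : Injective g) {q : ℝ}
    (hq : |q| < 1) : HasAbsSumAt (indicatorSeries (Set.range g)) q (∑' b, q ^ g b) := by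
  have hoff : ∀ n ∉ Set.range g, coeff n (indicatorSeries (Set.range g)) * q ^ n = 0 :=
    fun n hn => by rw [coeff_indicatorSeries, Set.indicator_of_notMem hn, zero_mul]
  have hcomp : (fun n => coeff n (indicatorSeries (Set.range g)) * q ^ n) ∘ g =
      fun b => q ^ g b := funext fun b => by
    simp [coeff_indicatorSeries]
  have hsummable := summable_norm_pow_comp_injective hg hq
  refine ⟨?_, ?_⟩
  · rw [← hg.summable_iff fun n hn => by rw [hoff n hn, norm_zero]]
    convert hsummable using 2 with b
    simp [coeff_indicatorSeries]
  · rw [← hg.hasSum_iff hoff, hcomp]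
    exact hsummable.of_norm.hasSum

noncomputable def geometricSeries (s : ℕ) : ℝ⟦X⟧ := indicatorSeries (Set.range (s * ·))

theorem coeff_mul_geometricSeries (s k : ℕ) : coeff (s * k) (geometricSeries s) = 1 := by
  simp [geometricSeries, coeff_indicatorSeries]

theorem coeff_zero_geometricSeries (s : ℕ) : coeff 0 (geometricSeries s) = 1 := by
  simpa using coeff_mul_geometricSeries s 0

theorem coeff_geometricSeries_of_pos_of_lt {s j : ℕ} (hj : 0 < j) (hjs : j < s) :
    coeff j (geometricSeries s) = 0 := by
  rw [geometricSeries, coeff_indicatorSeries, Set.indicator_of_notMem]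
  rintro ⟨k, rfl⟩
  simp only at hj hjs
  rcases k with _ | k
  · omega
  · nlinarith

theorem geometricSeries_mem_nonnegCoeffs (s : ℕ) : geometricSeries s ∈ nonnegCoeffs :=
  indicatorSeries_mem_nonnegCoeffs _

theorem coeff_mul_geometricSeries_of_lt (φ : ℝ⟦X⟧) {s n : ℕ} (hn : n < s) :
    coeff n (φ * geometricSeries s) = coeff n φ := by
  rw [coeff_mul, sum_eq_single (n, 0)]
  · rw [coeff_zero_geometricSeries, mul_one]
  · rintro ⟨i, j⟩ hij hne
    rw [HasAntidiagonal.mem_antidiagonal] at hij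
    have hj : 0 < j := Nat.pos_of_ne_zero fun hj => hne (by simp_all)
    rw [coeff_geometricSeries_of_pos_of_lt hj (by omega), mul_zero]
  · exact fun h => absurd (HasAntidiagonal.mem_antidiagonal.2 (add_zero n)) h

theorem hasAbsSumAt_geometricSeries {s : ℕ} (hs : s ≠ 0) {q : ℝ} (hq : |q| < 1) :
    HasAbsSumAt (geometricSeries s) q (1 - q ^ s)⁻¹ := by
  have h := hasAbsSumAt_indicatorSeries_range (mul_right_injective₀ hs) hq
  rwa [tsum_congr fun k => pow_mul q s k, tsum_geometric_of_abs_lt_one (abs_pow_lt_one hq hs)] at h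

section InvProd

variable {e : ℕ → ℕ}

noncomputable def partialInvProd (e : ℕ → ℕ) (N : ℕ) : ℝ⟦X⟧ :=
  ∏ i ∈ range N, geometricSeries (e i)

/-- The formal product `∏ᵢ (1 - X ^ e i)⁻¹`. When `i < e i` for all `i`, its `n`-th coefficient
is already determined by the first `n + 1` factors. -/
noncomputable def invProd (e : ℕ → ℕ) : ℝ⟦X⟧ :=
  mk fun n => coeff n (partialInvProd e (n + 1))

theorem partialInvProd_succ (e : ℕ → ℕ) (N : ℕ) :
    partialInvProd e (N + 1) = partialInvProd e N * geometricSeries (e N) :=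
  prod_range_succ _ N

theorem partialInvProd_mem_nonnegCoeffs (e : ℕ → ℕ) (N : ℕ) :
    partialInvProd e N ∈ nonnegCoeffs :=
  prod_mem fun i _ => geometricSeries_mem_nonnegCoeffs (e i)

theorem monotone_coeff_partialInvProd (e : ℕ → ℕ) (n : ℕ) :
    Monotone fun N => coeff n (partialInvProd e N) := by
  refine monotone_nat_of_le_succ fun N => ?_
  have h := coeff_mul_coeff_le_coeff_mul (partialInvProd_mem_nonnegCoeffs e N)
    (geometricSeries_mem_nonnegCoeffs (e N)) n 0
  rwa [coeff_zero_geometricSeries, mul_one, add_zero,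
    ← partialInvProd_succ] at h

theorem coeff_partialInvProd_eq_coeff_invProd (he : ∀ i, i < e i) {n N : ℕ} (hn : n < N) :
    coeff n (partialInvProd e N) = coeff n (invProd e) := by
  rw [invProd, coeff_mk]
  induction N, hn using Nat.le_induction with
  | base => rfl
  | succ N hN ih =>
    rw [partialInvProd_succ,
      coeff_mul_geometricSeries_of_lt _ ((Nat.lt_of_succ_le hN).trans (he N)), ih]

theorem coeff_partialInvProd_le_coeff_invProd (he : ∀ i, i < e i) (n N : ℕ) :
    coeff n (partialInvProd e N) ≤ coeff n (invProd e) :=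
  (monotone_coeff_partialInvProd e n (le_max_left N (n + 1))).trans_eq
    (coeff_partialInvProd_eq_coeff_invProd he (lt_max_of_lt_right (lt_add_one n)))

theorem invProd_mem_nonnegCoeffs (e : ℕ → ℕ) : invProd e ∈ nonnegCoeffs := fun n => by
  rw [invProd, coeff_mk]
  exact partialInvProd_mem_nonnegCoeffs e _ n

theorem coeff_invProd_pos (e : ℕ → ℕ) (k : ℕ) : 0 < coeff (e 0 * k) (invProd e) := by
  rw [invProd, coeff_mk]
  refine zero_lt_one.trans_le ?_
  calc (1 : ℝ) = coeff (e 0 * k) (partialInvProd e 1) := by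
        simp [partialInvProd, coeff_mul_geometricSeries]
    _ ≤ _ := monotone_coeff_partialInvProd e _ (Nat.succ_le_succ (Nat.zero_le _))

theorem coeff_mul_invProd_pos {φ : ℝ⟦X⟧} (hφ : φ ∈ nonnegCoeffs) {n : ℕ} (hn : 0 < coeff n φ)
    (k : ℕ) : 0 < coeff (n + e 0 * k) (φ * invProd e) :=
  coeff_mul_pos hφ (invProd_mem_nonnegCoeffs e) hn (coeff_invProd_pos e k)

variable {q : ℝ}

theorem hasAbsSumAt_partialInvProd (he : ∀ i, i < e i) (hq : |q| < 1) (N : ℕ) :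
    HasAbsSumAt (partialInvProd e N) q (∏ i ∈ range N, (1 - q ^ e i))⁻¹ := by
  rw [← prod_inv_distrib]
  exact HasAbsSumAt.prod _ fun i _ => hasAbsSumAt_geometricSeries (Nat.ne_zero_of_lt (he i)) hq

theorem summable_norm_coeff_invProd_mul_pow (he : ∀ i, i < e i) (hq : |q| < 1) :
    Summable fun n => ‖coeff n (invProd e) * q ^ n‖ := by
  have hq' : |(|q|)| < 1 := by rwa [abs_abs]
  refine summable_of_sum_range_le (c := (∏' i, (1 - |q| ^ e i))⁻¹) (fun _ => norm_nonneg _)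
    fun N => ?_
  calc ∑ n ∈ range N, ‖coeff n (invProd e) * q ^ n‖
      = ∑ n ∈ range N, coeff n (partialInvProd e N) * |q| ^ n := sum_congr rfl fun n hn => by
        rw [norm_mul, norm_pow, Real.norm_of_nonneg (invProd_mem_nonnegCoeffs e n),
          Real.norm_eq_abs, coeff_partialInvProd_eq_coeff_invProd he (mem_range.1 hn)]
    _ ≤ (∏ i ∈ range N, (1 - |q| ^ e i))⁻¹ :=
        sum_le_hasSum _ (fun n _ => mul_nonneg (partialInvProd_mem_nonnegCoeffs e N n)
          (pow_nonneg (abs_nonneg q) n)) (hasAbsSumAt_partialInvProd he hq' N).2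
    _ ≤ (∏' i, (1 - |q| ^ e i))⁻¹ :=
        inv_anti₀ (tprod_one_sub_pow_pos he hq')
          (tprod_le_prod_range_one_sub_pow he (abs_nonneg q) hq N)

theorem hasAbsSumAt_invProd (he : ∀ i, i < e i) (hq : |q| < 1) :
    HasAbsSumAt (invProd e) q (∏' i, (1 - q ^ e i))⁻¹ := by
  have hsum := summable_norm_coeff_invProd_mul_pow he hq
  refine ⟨hsum, ?_⟩
  suffices h : ∑' n, coeff n (invProd e) * q ^ n = (∏' i, (1 - q ^ e i))⁻¹ from
    h ▸ hsum.of_norm.hasSum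
  refine tendsto_nhds_unique ?_
    ((tendsto_prod_range_one_sub_pow he hq).inv₀ (tprod_one_sub_pow_pos he hq).ne')
  refine (tendsto_tsum_of_dominated_convergence hsum (fun n => ?_)
    (Eventually.of_forall fun N n => ?_)).congr
    fun N => (hasAbsSumAt_partialInvProd he hq N).2.tsum_eq
  · refine tendsto_const_nhds.congr' ?_
    filter_upwards [eventually_gt_atTop n] with N hN
    rw [coeff_partialInvProd_eq_coeff_invProd he hN]
  · rw [norm_mul, norm_mul, Real.norm_of_nonneg (partialInvProd_mem_nonnegCoeffs e N n),
      Real.norm_of_nonneg (invProd_mem_nonnegCoeffs e n)]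
    gcongr
    exact coeff_partialInvProd_le_coeff_invProd he n N

end InvProd

/-- `θ(X ^ k) = ∑_{n ∈ ℤ} X ^ (k n²) = 1 + 2 ∑_{n ≥ 1} X ^ (k n²)`. -/
noncomputable def thetaSeries (k : ℕ) : ℝ⟦X⟧ :=
  1 + 2 • indicatorSeries (Set.range fun n : ℕ+ => k * (n : ℕ) ^ 2)

theorem thetaSeries_mem_nonnegCoeffs (k : ℕ) : thetaSeries k ∈ nonnegCoeffs :=
  add_mem (one_mem _) (nsmul_mem (indicatorSeries_mem_nonnegCoeffs _) 2)

theorem coeff_zero_thetaSeries_pos (k : ℕ) : 0 < coeff 0 (thetaSeries k) :=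
  coeff_add_pos (nsmul_mem (indicatorSeries_mem_nonnegCoeffs _) 2) (by simp)

theorem coeff_one_thetaSeries_one_pos : 0 < coeff 1 (thetaSeries 1) := by
  have h : (1 : ℕ) ∈ Set.range fun n : ℕ+ => 1 * (n : ℕ) ^ 2 := ⟨1, by simp⟩
  rw [thetaSeries, map_add, map_nsmul, coeff_indicatorSeries, Set.indicator_of_mem h]
  norm_num

theorem coeff_thetaSeries_one_sq_pos {r : ℕ} (hr : r < 3) : 0 < coeff r (thetaSeries 1 ^ 2) := by
  have h := thetaSeries_mem_nonnegCoeffs 1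
  have h₀ := coeff_zero_thetaSeries_pos 1
  have h₁ := coeff_one_thetaSeries_one_pos
  rw [sq]
  obtain rfl | rfl | rfl : r = 0 ∨ r = 1 ∨ r = 2 := by omega
  · exact coeff_mul_pos (i := 0) (j := 0) h h h₀ h₀
  · exact coeff_mul_pos (i := 0) (j := 1) h h h₀ h₁
  · exact coeff_mul_pos (i := 1) (j := 1) h h h₁ h₁

theorem hasAbsSumAt_thetaSeries {k : ℕ} (hk : k ≠ 0) {q : ℝ} (hq : |q| < 1) :
    HasAbsSumAt (thetaSeries k) q (phiR (q ^ k)) := by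
  have hg : Injective fun n : ℕ+ => k * (n : ℕ) ^ 2 :=
    (mul_right_injective₀ hk).comp ((Nat.pow_left_injective two_ne_zero).comp PNat.coe_injective)
  have h := hasAbsSumAt_indicatorSeries_range hg hq
  rw [thetaSeries, two_nsmul, phiR_eq_one_add_two_mul_tsum (abs_pow_lt_one hq hk), two_mul]
  simp only [← pow_mul]
  exact (HasAbsSumAt.one q).add (h.add h)

end PowerSeries

/-- Every coefficient of the power series expansion of
`(φ(q)² + φ(q³)²)/J_{3,12}` is strictly positive. -/
theorem coeffs_pos :
    ∃ c : ℕ → ℝ, (∀ n, 0 < c n) ∧ ∀ q : ℝ, |q| < 1 →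
      (phiR q ^ 2 + phiR (q ^ 3) ^ 2) /
        (qPochR (q ^ 3) (q ^ 12) * qPochR (q ^ 9) (q ^ 12) * qPochR (q ^ 12) (q ^ 12)) =
      ∑' n : ℕ, c n * q ^ n := by
  have hΘ : thetaSeries 1 ^ 2 + thetaSeries 3 ^ 2 ∈ nonnegCoeffs :=
    add_mem (pow_mem (thetaSeries_mem_nonnegCoeffs 1) 2)
      (pow_mem (thetaSeries_mem_nonnegCoeffs 3) 2)
  refine ⟨fun n => coeff n ((thetaSeries 1 ^ 2 + thetaSeries 3 ^ 2) *
    invProd (fun i => 3 + 12 * i) * invProd (fun i => 9 + 12 * i) *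
    invProd (fun i => 12 + 12 * i)), fun n => ?_, fun q hq => ?_⟩
  · -- the last two factors contribute their constant coefficient `1`
    obtain ⟨r, k, hr, rfl⟩ : ∃ r k, r < 3 ∧ n = r + 3 * k + 9 * 0 + 12 * 0 :=
      ⟨n % 3, n / 3, Nat.mod_lt n three_pos, by omega⟩
    have hΘr : 0 < coeff r (thetaSeries 1 ^ 2 + thetaSeries 3 ^ 2) :=
      coeff_add_pos (pow_mem (thetaSeries_mem_nonnegCoeffs 3) 2) (coeff_thetaSeries_one_sq_pos hr)
    have hΘA := mul_mem hΘ (invProd_mem_nonnegCoeffs fun i => 3 + 12 * i)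
    exact coeff_mul_invProd_pos (mul_mem hΘA (invProd_mem_nonnegCoeffs _))
      (coeff_mul_invProd_pos hΘA (coeff_mul_invProd_pos hΘ hΘr k) 0) 0
  · have hθ {k : ℕ} (hk : k ≠ 0) : HasAbsSumAt (thetaSeries k ^ 2) q (phiR (q ^ k) ^ 2) := by
      simpa only [sq] using (hasAbsSumAt_thetaSeries hk hq).mul (hasAbsSumAt_thetaSeries hk hq)
    have hinv {a : ℕ} (ha : a ≠ 0) :
        HasAbsSumAt (invProd fun i => a + 12 * i) q (∏' i, (1 - q ^ (a + 12 * i)))⁻¹ :=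
      hasAbsSumAt_invProd (fun i => by omega) hq
    have hΦ := ((((hθ one_ne_zero).add (hθ three_ne_zero)).mul (hinv three_ne_zero)).mul
      (hinv (by norm_num : 9 ≠ 0))).mul (hinv (by norm_num : 12 ≠ 0))
    rw [qPochR_pow_pow, qPochR_pow_pow, qPochR_pow_pow, hΦ.2.tsum_eq, pow_one, div_eq_mul_inv,
      mul_inv, mul_inv]
    ring
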